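/- arXiv:1804.05949 — 2 statements merged into one kernel-verified Lean document; each statement's English description precedes it below -/
import Mathlib

section
/- For real numbers ρ and p, the following are equivalent: (i) for every real number α with α² ≥ 1, one has (8π/3)·(α²·(3/2)·(ρ + p) − ρ) ≥ 0; (ii) ρ + p ≥ 0 and ρ + 3p ≥ 0. (This is the paper's result that FLRW models have everywhere nonpositive timelike sectional curvatures K ≤ 0 if and only if ρ + p ≥ 0 and ρ + 3p ≥ 0.) -/
open Real

theorem flrw_nonpos_sect_iff_sec (ρ p : ℝ) :
    (∀ α : ℝ, α ^ 2 ≥ 1 → (8 * π / 3) * (α ^ 2 * (3 / 2) * (ρ + p) - ρ) ≥ 0) ↔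
    (ρ + p ≥ 0 ∧ ρ + 3 * p ≥ 0) := by
  have hπ : (0:ℝ) < 8 * π / 3 := by positivity
  constructor
  · intro h
    have h1 := h 1 (by norm_num)
    have h13 : ρ + 3 * p ≥ 0 := by nlinarith
    refine ⟨?_, h13⟩
    by_contra hneg
    push_neg at hneg
    set t : ℝ := max 1 ((ρ / ((3/2) * (ρ + p))) + 1) with ht
    have ht1 : 1 ≤ t := le_max_left _ _
    have ht0 : 0 ≤ t := by linarith
    have hα := h (Real.sqrt t) (by rw [sq_sqrt ht0]; exact ht1)
    rw [sq_sqrt ht0] at hα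
    have key : t * (3/2) * (ρ + p) - ρ ≥ 0 := by
      have := (mul_nonneg_iff_of_pos_left hπ).mp hα
      linarith
    have ht2 : (ρ / ((3/2) * (ρ + p))) + 1 ≤ t := le_max_right _ _
    have hd : (3/2) * (ρ + p) < 0 := by linarith
    have : t * ((3/2) * (ρ + p)) < ρ := by
      have := (div_le_iff_of_neg hd).mp (by linarith : ρ / ((3/2) * (ρ + p)) ≤ t - 1)
      nlinarith
    linarith [key]
  · rintro ⟨h1, h2⟩ α hα
    have : α ^ 2 * (3 / 2) * (ρ + p) - ρ ≥ 0 := by nlinarith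
    positivity
end

section
/- Let ρ and p be real numbers. Then the following are equivalent: (i) for every x : Fin 4 → ℝ with η(x,x) < 0, one has 8π(ρ + p)·(x 0)² + 4π(ρ − p)·η(x,x) ≥ 0; (ii) ρ + p ≥ 0 and ρ + 3p ≥ 0. (This is the statement that the strong energy condition for a perfect fluid with density ρ, pressure p, and fluid velocity u = e₀ is equivalent to ρ + p ≥ 0 and ρ + 3p ≥ 0.) -/
open Real

/-- The Minkowski bilinear form on `ℝ⁴`. -/
def minkowski (x y : Fin 4 → ℝ) : ℝ :=
  -(x 0 * y 0) + x 1 * y 1 + x 2 * y 2 + x 3 * y 3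

theorem perfect_fluid_sec_iff (ρ p : ℝ) :
    (∀ x : Fin 4 → ℝ, minkowski x x < 0 →
      8 * π * (ρ + p) * (x 0) ^ 2 + 4 * π * (ρ - p) * minkowski x x ≥ 0) ↔
    (ρ + p ≥ 0 ∧ ρ + 3 * p ≥ 0) := by
  have hπ : (0:ℝ) < π := Real.pi_pos
  constructor
  · intro h
    constructor
    · by_contra hA
      push_neg at hA
      set ε : ℝ := min (1/2) ((-(ρ + p)) / (|ρ - p| + 1)) with hε
      have habs : (0:ℝ) < |ρ - p| + 1 := by positivity
      have hε0 : 0 < ε := by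
        apply lt_min (by norm_num)
        exact div_pos (by linarith) habs
      have hε1 : ε ≤ 1/2 := min_le_left _ _
      have hε2 : ε ≤ (-(ρ + p)) / (|ρ - p| + 1) := min_le_right _ _
      have hs : (0:ℝ) ≤ 1 - ε := by linarith
      have h1 := h ![1, Real.sqrt (1 - ε), 0, 0]
      have hsq : Real.sqrt (1 - ε) * Real.sqrt (1 - ε) = 1 - ε :=
        Real.mul_self_sqrt hs
      simp only [minkowski, Matrix.cons_val_zero, Matrix.cons_val_one, Matrix.head_cons,
        Matrix.cons_val_two, Matrix.tail_cons, Matrix.cons_val_three] at h1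
      rw [hsq] at h1
      have hmin : -(1 * 1 : ℝ) + (1 - ε) + 0 * 0 + 0 * 0 = -ε := by ring
      rw [hmin] at h1
      have h2 := h1 (by linarith)
      -- from hε2 : ε * (|ρ-p|+1) ≤ -(ρ+p)
      have h3 : ε * (|ρ - p| + 1) ≤ -(ρ + p) := by
        calc ε * (|ρ - p| + 1) ≤ ((-(ρ + p)) / (|ρ - p| + 1)) * (|ρ - p| + 1) := by
              apply mul_le_mul_of_nonneg_right hε2 (le_of_lt habs)
          _ = -(ρ + p) := by field_simp
      have h4 : ρ - p ≤ |ρ - p| := le_abs_self _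
      have h5 : -(|ρ - p|) ≤ ρ - p := neg_abs_le _
      -- h2 : 8π(ρ+p)·1 + 4π(ρ-p)(-ε) ≥ 0
      nlinarith [mul_pos hπ hε0, mul_nonneg hε0.le (abs_nonneg (ρ - p)),
        mul_le_mul_of_nonneg_left h4 hε0.le]
    · have h1 := h ![1, 0, 0, 0]
      simp only [minkowski, Matrix.cons_val_zero, Matrix.cons_val_one, Matrix.head_cons,
        Matrix.cons_val_two, Matrix.tail_cons, Matrix.cons_val_three] at h1
      norm_num at h1
      nlinarith [h1]
  · rintro ⟨hA, hC⟩ x hx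
    have hr : (0:ℝ) ≤ x 1 * x 1 + x 2 * x 2 + x 3 * x 3 :=
      add_nonneg (add_nonneg (mul_self_nonneg _) (mul_self_nonneg _)) (mul_self_nonneg _)
    have hx0 : -(minkowski x x) ≤ (x 0) ^ 2 := by
      simp only [minkowski]; nlinarith
    unfold minkowski at *
    nlinarith [mul_nonneg hπ.le hA, mul_nonneg hπ.le hC,
      mul_nonneg (mul_nonneg hπ.le hA) (sq_nonneg (x 0)),
      mul_nonneg (mul_nonneg hπ.le hA) hr,
      mul_nonneg (mul_nonneg hπ.le hC) (neg_nonneg.mpr hx.le)]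
end
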